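/- arXiv:1311.4296 — 6 statements merged into one kernel-verified Lean document; each statement's English description precedes it below -/
import Mathlib

section
/- Let F be a submodular function on V with F(∅) = 0, let x ∈ ℝ^V, and let σ be any permutation of V with x_{σ(1)} ≥ x_{σ(2)} ≥ ⋯ ≥ x_{σ(n)}. Define the greedy vector y ∈ ℝ^V by y_{σ(k)} = F({σ(1),…,σ(k)}) − F({σ(1),…,σ(k−1)}) for k = 1,…,n. Then y ∈ B(F) (in particular B(F) is nonempty), and ⟨y, x⟩ = max_{z ∈ B(F)} ⟨z, x⟩; consequently the Lovász extension satisfies f(x) = max_{z ∈ B(F)} ⟨z, x⟩. -/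
open Finset
open Finset

def Submodular {n : ℕ} (F : Finset (Fin n) → ℝ) : Prop :=
  ∀ S T : Finset (Fin n), F (S ∪ T) + F (S ∩ T) ≤ F S + F T

def basePolytope {n : ℕ} (F : Finset (Fin n) → ℝ) : Set (Fin n → ℝ) :=
  {y | (∀ S : Finset (Fin n), ∑ i ∈ S, y i ≤ F S) ∧ ∑ i, y i = F Finset.univ}

def SortsDesc {n : ℕ} (x : Fin n → ℝ) (σ : Equiv.Perm (Fin n)) : Prop :=
  ∀ j k : Fin n, j ≤ k → x (σ k) ≤ x (σ j)

def lovaszVal {n : ℕ} (F : Finset (Fin n) → ℝ) (x : Fin n → ℝ) (σ : Equiv.Perm (Fin n)) : ℝ :=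
  ∑ k : Fin n, x (σ k) *
    (F ((Finset.univ.filter (fun j => j ≤ k)).image ⇑σ)
      - F ((Finset.univ.filter (fun j => j < k)).image ⇑σ))

def IsLovasz {n : ℕ} (F : Finset (Fin n) → ℝ) (f : (Fin n → ℝ) → ℝ) : Prop :=
  ∀ (x : Fin n → ℝ) (σ : Equiv.Perm (Fin n)), SortsDesc x σ → f x = lovaszVal F x σ

/-- The greedy vector associated with a submodular function `F` and a sorting
permutation `σ`:  `y (σ k) = F({σ 0,…,σ k}) − F({σ 0,…,σ (k−1)})`. -/
def greedyVec {n : ℕ} (F : Finset (Fin n) → ℝ) (σ : Equiv.Perm (Fin n)) : Fin n → ℝ :=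
  fun i => F ((Finset.univ.filter (fun j => j ≤ σ.symm i)).image ⇑σ)
    - F ((Finset.univ.filter (fun j => j < σ.symm i)).image ⇑σ)

/-!
The greedy vector `y` telescopes along the chain of prefixes `P k = {σ 0, …, σ (k - 1)}`, so
`y (P k) = F (P k)`. Adding the elements of `S` one at a time, submodularity gives
`y (S ∩ P (k + 1)) - y (S ∩ P k) ≤ F (S ∩ P (k + 1)) - F (S ∩ P k)`, hence `y ∈ B(F)`.
For `z ∈ B(F)` the prefix sums of `y - z` are nonnegative and vanish at `P n = V`; Abel summation
against the decreasing sequence `x ∘ σ` then gives `⟨z, x⟩ ≤ ⟨y, x⟩`.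
-/

lemma sum_range_mul_nonneg_of_antitoneOn {a d : ℕ → ℝ} {n : ℕ}
    (ha : AntitoneOn a (Set.Iio n))
    (hd : ∀ k ≤ n, 0 ≤ ∑ m ∈ range k, d m) (hdn : ∑ m ∈ range n, d m = 0) :
    0 ≤ ∑ m ∈ range n, a m * d m := by
  have hterm : ∀ m ∈ range (n - 1), (a (m + 1) - a m) * ∑ j ∈ range (m + 1), d j ≤ 0 := by
    intro m hm
    have hm : m + 1 < n := by rw [mem_range] at hm; omega
    exact mul_nonpos_of_nonpos_of_nonneg
      (sub_nonpos.2 (ha (by simp; omega) (by simpa using hm) m.le_succ)) (hd _ hm.le)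
  have habel := sum_range_by_parts a d n
  simp only [smul_eq_mul, hdn, mul_zero, zero_sub] at habel
  rw [habel, neg_nonneg]
  exact sum_nonpos hterm

section Greedy

variable {n : ℕ} (σ : Equiv.Perm (Fin n))

def prefixSet (k : ℕ) : Finset (Fin n) :=
  (univ.filter fun j : Fin n => (j : ℕ) < k).image σ

@[simp]
lemma prefixSet_zero : prefixSet σ 0 = ∅ := by
  simp [prefixSet]

lemma prefixSet_of_le {k : ℕ} (hk : n ≤ k) : prefixSet σ k = univ :=
  eq_univ_of_forall fun i =>
    mem_image.2 ⟨σ.symm i, by simpa using (σ.symm i).isLt.trans_le hk, σ.apply_symm_apply i⟩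

lemma apply_notMem_prefixSet {k : ℕ} (hk : k < n) : σ ⟨k, hk⟩ ∉ prefixSet σ k := by
  simp [prefixSet]

lemma prefixSet_succ {k : ℕ} (hk : k < n) :
    prefixSet σ (k + 1) = insert (σ ⟨k, hk⟩) (prefixSet σ k) := by
  ext i
  simp only [prefixSet, mem_image, mem_filter, mem_univ, true_and, mem_insert,
    Nat.lt_succ_iff_lt_or_eq]
  constructor
  · rintro ⟨j, hj | rfl, rfl⟩
    exacts [Or.inr ⟨j, hj, rfl⟩, Or.inl rfl]
  · rintro (rfl | ⟨j, hj, rfl⟩)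
    exacts [⟨_, Or.inr rfl, rfl⟩, ⟨j, Or.inl hj, rfl⟩]

lemma greedyVec_apply_perm (F : Finset (Fin n) → ℝ) (j : Fin n) :
    greedyVec F σ (σ j) = F (prefixSet σ (j + 1)) - F (prefixSet σ j) := by
  simp only [greedyVec, prefixSet, Equiv.symm_apply_apply, Fin.le_def, Fin.lt_def,
    Nat.lt_succ_iff]

lemma sum_prefixSet_greedyVec (F : Finset (Fin n) → ℝ) {k : ℕ} (hk : k ≤ n) :
    ∑ i ∈ prefixSet σ k, greedyVec F σ i = F (prefixSet σ k) - F ∅ := by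
  induction k with
  | zero => simp
  | succ k ih =>
    rw [prefixSet_succ σ hk, sum_insert (apply_notMem_prefixSet σ hk), ih (by omega),
      ← prefixSet_succ σ hk, greedyVec_apply_perm]
    ring

lemma Submodular.sum_inter_prefixSet_greedyVec_le {F : Finset (Fin n) → ℝ} (hF : Submodular F)
    (S : Finset (Fin n)) {k : ℕ} (hk : k ≤ n) :
    ∑ i ∈ S ∩ prefixSet σ k, greedyVec F σ i ≤ F (S ∩ prefixSet σ k) - F ∅ := by
  induction k with
  | zero => simp
  | succ k ih =>
    set a := σ ⟨k, hk⟩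
    have ha : a ∉ prefixSet σ k := apply_notMem_prefixSet σ hk
    have ih := ih (by omega)
    by_cases haS : a ∈ S
    · have hsub := hF (S ∩ prefixSet σ (k + 1)) (prefixSet σ k)
      have hunion : S ∩ prefixSet σ (k + 1) ∪ prefixSet σ k = prefixSet σ (k + 1) := by
        rw [prefixSet_succ σ hk]; ext i; simp only [mem_union, mem_inter, mem_insert]; aesop
      have hinter : S ∩ prefixSet σ (k + 1) ∩ prefixSet σ k = S ∩ prefixSet σ k := by
        rw [prefixSet_succ σ hk]; ext i; simp only [mem_inter, mem_insert]; aesop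
      have hstep : S ∩ prefixSet σ (k + 1) = insert a (S ∩ prefixSet σ k) := by
        rw [prefixSet_succ σ hk, inter_insert_of_mem haS]
      have hy : greedyVec F σ a = F (prefixSet σ (k + 1)) - F (prefixSet σ k) :=
        greedyVec_apply_perm σ F _
      rw [hunion, hinter] at hsub
      rw [hstep, sum_insert fun h => ha (mem_inter.1 h).2, ← hstep, hy]
      linarith
    · rw [prefixSet_succ σ hk, inter_insert_of_notMem haS]
      exact ih

lemma Submodular.sum_greedyVec_le {F : Finset (Fin n) → ℝ} (hF : Submodular F)
    (S : Finset (Fin n)) : ∑ i ∈ S, greedyVec F σ i ≤ F S - F ∅ := by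
  simpa [prefixSet_of_le σ le_rfl] using hF.sum_inter_prefixSet_greedyVec_le σ S le_rfl

-- `z ∘ σ` as a sequence on `ℕ`, padded with `0`, so that Abel summation over `range` applies.
def permSeq (z : Fin n → ℝ) (m : ℕ) : ℝ :=
  if h : m < n then z (σ ⟨m, h⟩) else 0

lemma permSeq_mul (z w : Fin n → ℝ) (m : ℕ) :
    permSeq σ (z * w) m = permSeq σ z m * permSeq σ w m := by
  unfold permSeq; split_ifs <;> simp

lemma sum_prefixSet_eq_sum_range (z : Fin n → ℝ) {k : ℕ} (hk : k ≤ n) :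
    ∑ i ∈ prefixSet σ k, z i = ∑ m ∈ range k, permSeq σ z m := by
  induction k with
  | zero => simp
  | succ k ih =>
    rw [prefixSet_succ σ hk, sum_insert (apply_notMem_prefixSet σ hk), ih (by omega),
      sum_range_succ, permSeq, dif_pos (show k < n from hk), add_comm]

lemma sum_eq_sum_range_permSeq (z : Fin n → ℝ) :
    ∑ i, z i = ∑ m ∈ range n, permSeq σ z m := by
  rw [← sum_prefixSet_eq_sum_range σ z le_rfl, prefixSet_of_le σ le_rfl]

lemma SortsDesc.antitoneOn_permSeq {x : Fin n → ℝ} (hσ : SortsDesc x σ) :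
    AntitoneOn (permSeq σ x) (Set.Iio n) := by
  intro j (hj : j < n) k (hk : k < n) hjk
  simp only [permSeq, dif_pos hj, dif_pos hk]
  exact hσ _ _ hjk

lemma SortsDesc.sum_mul_le_of_sum_prefixSet_le {x y z : Fin n → ℝ} (hσ : SortsDesc x σ)
    (hle : ∀ k ≤ n, ∑ i ∈ prefixSet σ k, z i ≤ ∑ i ∈ prefixSet σ k, y i)
    (heq : ∑ i, z i = ∑ i, y i) :
    ∑ i, z i * x i ≤ ∑ i, y i * x i := by
  have hpartial : ∀ k ≤ n, 0 ≤ ∑ m ∈ range k, permSeq σ (y - z) m := fun k hk => by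
    rw [← sum_prefixSet_eq_sum_range σ _ hk]
    simpa [sum_sub_distrib] using hle k hk
  have htotal : ∑ m ∈ range n, permSeq σ (y - z) m = 0 := by
    rw [← sum_eq_sum_range_permSeq]
    simp [sum_sub_distrib, heq]
  have habel := sum_range_mul_nonneg_of_antitoneOn hσ.antitoneOn_permSeq hpartial htotal
  simp only [← permSeq_mul, ← sum_eq_sum_range_permSeq, Pi.mul_apply, Pi.sub_apply, mul_sub,
    sum_sub_distrib, sub_nonneg] at habel
  simpa only [mul_comm (x _)] using habel

lemma Submodular.greedyVec_mem_basePolytope {F : Finset (Fin n) → ℝ} (hF0 : F ∅ = 0)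
    (hF : Submodular F) : greedyVec F σ ∈ basePolytope F := by
  refine ⟨fun S => by simpa [hF0] using hF.sum_greedyVec_le σ S, ?_⟩
  simpa [prefixSet_of_le σ le_rfl, hF0] using sum_prefixSet_greedyVec σ F le_rfl

lemma sum_greedyVec_mul_eq_lovaszVal (F : Finset (Fin n) → ℝ) (x : Fin n → ℝ) :
    ∑ i, greedyVec F σ i * x i = lovaszVal F x σ := by
  rw [lovaszVal, ← Equiv.sum_comp σ]
  simp only [greedyVec, Equiv.symm_apply_apply, mul_comm]

end Greedy

/-- Edmonds' greedy algorithm: for a submodular `F` with `F ∅ = 0`,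
any `x` and any permutation `σ` sorting `x` in decreasing order, the greedy vector
lies in the base polytope `B(F)`, its inner product with `x` equals the Lovász
extension value `f(x)`, and this value is the maximum of `⟨z, x⟩` over `z ∈ B(F)`. -/
theorem statement0 {n : ℕ} (F : Finset (Fin n) → ℝ) (hF0 : F ∅ = 0) (hF : Submodular F)
    (x : Fin n → ℝ) (σ : Equiv.Perm (Fin n)) (hσ : SortsDesc x σ) :
    greedyVec F σ ∈ basePolytope F ∧
    (∑ i, greedyVec F σ i * x i) = lovaszVal F x σ ∧
    IsGreatest ((fun z : Fin n → ℝ => ∑ i, z i * x i) '' basePolytope F)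
      (∑ i, greedyVec F σ i * x i) := by
  have hmem := hF.greedyVec_mem_basePolytope σ hF0
  refine ⟨hmem, sum_greedyVec_mul_eq_lovaszVal σ F x, ⟨_, hmem, rfl⟩, ?_⟩
  rintro _ ⟨z, hz, rfl⟩
  refine hσ.sum_mul_le_of_sum_prefixSet_le σ (fun k hk => ?_) (hz.2.trans hmem.2.symm)
  rw [sum_prefixSet_greedyVec σ F hk, hF0, sub_zero]
  exact hz.1 _
end

section
/- If the set function F on V with F(∅) = 0 is submodular, then its Lovász extension f : ℝ^V → ℝ is a convex function. -/
open Finset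
open Finset

/-! The Lovász extension along a fixed order `σ` is the linear functional `x ↦ ⟪x, y_σ⟫`, where `y_σ`
is the greedy vector of marginal gains along `σ`. By submodularity every `y_σ` lies in the base
polytope of `F - F ∅`, and Abel summation shows that on this polytope `⟪x, ·⟫` is maximised at
`y_τ` whenever `τ` sorts `x` decreasingly. Hence `f` is a pointwise maximum of linear functionals:
at `a • x + b • y` it equals `⟪a • x + b • y, y_τ⟫ = a ⟪x, y_τ⟫ + b ⟪y, y_τ⟫ ≤ a f x + b f y`. -/

variable {n : ℕ}

theorem Submodular.sub_insert_le {F : Finset (Fin n) → ℝ} (hF : Submodular F)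
    {A B : Finset (Fin n)} (hAB : A ⊆ B) {i : Fin n} (hi : i ∉ B) :
    F (insert i B) - F B ≤ F (insert i A) - F A := by
  have h := hF (insert i A) B
  rw [insert_union, union_eq_right.mpr hAB, insert_inter_of_notMem hi,
    inter_eq_left.mpr hAB] at h
  linarith

theorem sum_fin_sub_telescope {M : Type*} [AddCommGroup M] (G : ℕ → M) :
    ∑ k : Fin n, (G (k + 1) - G k) = G n - G 0 := by
  rw [Fin.sum_univ_eq_sum_range (fun m => G (m + 1) - G m), sum_range_sub]

theorem sum_antitone_mul_sub_le {a : Fin (n + 1) → ℝ} (ha : Antitone a) {D : ℕ → ℝ}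
    (hD : ∀ m ≤ n, D m ≤ D 0) :
    ∑ k : Fin (n + 1), a k * (D (k + 1) - D k) ≤ a (Fin.last n) * (D (n + 1) - D 0) := by
  induction n with
  | zero => simp
  | succ n ih =>
    have hprev := ih (ha.comp_monotone Fin.strictMono_castSucc.monotone)
      fun m hm => hD m (by omega)
    have hlast : a (Fin.last (n + 1)) ≤ a (Fin.last n).castSucc :=
      ha (Fin.castSucc_lt_last _).le
    rw [Fin.sum_univ_castSucc]
    simp only [Function.comp_apply, Fin.val_castSucc, Fin.val_last] at hprev ⊢
    nlinarith [hD (n + 1) le_rfl]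

theorem sum_antitone_mul_sub_nonpos {a : Fin n → ℝ} (ha : Antitone a) {D : ℕ → ℝ}
    (hD : ∀ m ≤ n, D m ≤ D 0) (hDn : D n = D 0) :
    ∑ k : Fin n, a k * (D (k + 1) - D k) ≤ 0 := by
  cases n with
  | zero => simp
  | succ n =>
    calc _ ≤ a (Fin.last n) * (D (n + 1) - D 0) :=
          sum_antitone_mul_sub_le ha fun m hm => hD m (by omega)
      _ = 0 := by rw [hDn, sub_self, mul_zero]

def permPrefix (σ : Equiv.Perm (Fin n)) (m : ℕ) : Finset (Fin n) :=
  univ.filter fun i => (σ.symm i : ℕ) < m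

section permPrefix

variable (σ : Equiv.Perm (Fin n))

@[simp]
theorem mem_permPrefix {m : ℕ} {i : Fin n} : i ∈ permPrefix σ m ↔ (σ.symm i : ℕ) < m := by
  simp [permPrefix]

theorem permPrefix_zero : permPrefix σ 0 = ∅ := by
  ext; simp

theorem permPrefix_of_le {m : ℕ} (hm : n ≤ m) : permPrefix σ m = univ := by
  ext i; simpa using (σ.symm i).isLt.trans_le hm

theorem permPrefix_succ (k : Fin n) : permPrefix σ (k + 1) = insert (σ k) (permPrefix σ k) := by
  ext i
  rw [mem_insert, mem_permPrefix, mem_permPrefix, Nat.lt_succ_iff_lt_or_eq, ← Fin.ext_iff,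
    Equiv.symm_apply_eq, or_comm]

theorem apply_notMem_permPrefix (k : Fin n) : σ k ∉ permPrefix σ k := by
  simp

theorem sum_permPrefix_succ_sub (y : Fin n → ℝ) (k : Fin n) :
    ∑ i ∈ permPrefix σ (k + 1), y i - ∑ i ∈ permPrefix σ k, y i = y (σ k) := by
  rw [permPrefix_succ, sum_insert (apply_notMem_permPrefix σ k), add_sub_cancel_right]

theorem lovaszVal_eq_sum_permPrefix (F : Finset (Fin n) → ℝ) (x : Fin n → ℝ) :
    lovaszVal F x σ =
      ∑ k : Fin n, x (σ k) * (F (permPrefix σ (k + 1)) - F (permPrefix σ k)) := by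
  have hle (k : Fin n) : (univ.filter (· ≤ k)).image σ = permPrefix σ (k + 1) := by
    ext i; simp [← Equiv.eq_symm_apply]
  have hlt (k : Fin n) : (univ.filter (· < k)).image σ = permPrefix σ k := by
    ext i; simp [← Equiv.eq_symm_apply]
  simp only [lovaszVal, hle, hlt]

end permPrefix

def greedyVector (F : Finset (Fin n) → ℝ) (σ : Equiv.Perm (Fin n)) (i : Fin n) : ℝ :=
  F (permPrefix σ (σ.symm i + 1)) - F (permPrefix σ (σ.symm i))

section greedyVector

variable (F : Finset (Fin n) → ℝ) (σ : Equiv.Perm (Fin n))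

theorem greedyVector_apply_perm (k : Fin n) :
    greedyVector F σ (σ k) = F (permPrefix σ (k + 1)) - F (permPrefix σ k) := by
  simp [greedyVector]

theorem lovaszVal_eq_sum_mul_greedyVector (x : Fin n → ℝ) :
    lovaszVal F x σ = ∑ i, x i * greedyVector F σ i := by
  rw [lovaszVal_eq_sum_permPrefix, ← Equiv.sum_comp σ fun i => x i * greedyVector F σ i]
  simp only [greedyVector_apply_perm]

theorem sum_greedyVector : ∑ i, greedyVector F σ i = F univ - F ∅ := by
  rw [← Equiv.sum_comp σ]
  simp only [greedyVector_apply_perm]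
  rw [sum_fin_sub_telescope (fun m => F (permPrefix σ m)), permPrefix_of_le σ le_rfl,
    permPrefix_zero]

variable {F}

theorem Submodular.ite_greedyVector_le (hF : Submodular F) (S : Finset (Fin n)) (k : Fin n) :
    (if σ k ∈ S then greedyVector F σ (σ k) else 0) ≤
      F (S ∩ permPrefix σ (k + 1)) - F (S ∩ permPrefix σ k) := by
  rw [greedyVector_apply_perm, permPrefix_succ]
  split_ifs with hk
  · rw [inter_insert_of_mem hk]
    exact hF.sub_insert_le inter_subset_right (apply_notMem_permPrefix σ k)
  · rw [inter_insert_of_notMem hk, sub_self]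

theorem Submodular.sum_greedyVector_le (hF : Submodular F) (S : Finset (Fin n)) :
    ∑ i ∈ S, greedyVector F σ i ≤ F S - F ∅ := by
  calc ∑ i ∈ S, greedyVector F σ i
      = ∑ k : Fin n, if σ k ∈ S then greedyVector F σ (σ k) else 0 := by
        rw [Equiv.sum_comp σ fun i => if i ∈ S then greedyVector F σ i else 0, sum_ite_mem,
          univ_inter]
    _ ≤ ∑ k : Fin n, (F (S ∩ permPrefix σ (k + 1)) - F (S ∩ permPrefix σ k)) :=
        sum_le_sum fun k _ => hF.ite_greedyVector_le σ S k
    _ = F S - F ∅ := by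
        rw [sum_fin_sub_telescope (fun m => F (S ∩ permPrefix σ m)), permPrefix_of_le σ le_rfl,
          permPrefix_zero, inter_univ, inter_empty]

end greedyVector

theorem sum_mul_le_lovaszVal {F : Finset (Fin n) → ℝ} {x y : Fin n → ℝ}
    (hy : ∀ S, ∑ i ∈ S, y i ≤ F S - F ∅) (hyV : ∑ i, y i = F univ - F ∅)
    {τ : Equiv.Perm (Fin n)} (hτ : SortsDesc x τ) :
    ∑ i, x i * y i ≤ lovaszVal F x τ := by
  set D : ℕ → ℝ := fun m => ∑ i ∈ permPrefix τ m, y i - F (permPrefix τ m)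
  have hdiff : ∑ i, x i * y i - lovaszVal F x τ = ∑ k : Fin n, x (τ k) * (D (k + 1) - D k) := by
    rw [lovaszVal_eq_sum_permPrefix, ← Equiv.sum_comp τ, ← sum_sub_distrib]
    refine sum_congr rfl fun k _ => ?_
    rw [← sum_permPrefix_succ_sub τ y k]
    ring
  have hD : ∀ m ≤ n, D m ≤ D 0 := fun m _ => by
    simp only [D, permPrefix_zero, sum_empty]
    linarith [hy (permPrefix τ m)]
  have hDn : D n = D 0 := by
    simp only [D, permPrefix_zero, permPrefix_of_le τ le_rfl, sum_empty, hyV]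
    ring
  linarith [sum_antitone_mul_sub_nonpos (a := fun k => x (τ k)) hτ hD hDn]

theorem Submodular.lovaszVal_le_of_sortsDesc {F : Finset (Fin n) → ℝ} (hF : Submodular F)
    {x : Fin n → ℝ} (σ : Equiv.Perm (Fin n)) {τ : Equiv.Perm (Fin n)} (hτ : SortsDesc x τ) :
    lovaszVal F x σ ≤ lovaszVal F x τ := by
  rw [lovaszVal_eq_sum_mul_greedyVector]
  exact sum_mul_le_lovaszVal (hF.sum_greedyVector_le σ) (sum_greedyVector F σ) hτ

theorem lovaszVal_add_smul (F : Finset (Fin n) → ℝ) (σ : Equiv.Perm (Fin n))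
    (a b : ℝ) (x y : Fin n → ℝ) :
    lovaszVal F (a • x + b • y) σ = a * lovaszVal F x σ + b * lovaszVal F y σ := by
  simp only [lovaszVal_eq_sum_mul_greedyVector, mul_sum, ← sum_add_distrib]
  refine sum_congr rfl fun i _ => ?_
  simp only [Pi.add_apply, Pi.smul_apply, smul_eq_mul]
  ring

theorem exists_sortsDesc (x : Fin n → ℝ) : ∃ τ : Equiv.Perm (Fin n), SortsDesc x τ :=
  ⟨Tuple.sort (-x), fun _ _ hjk => neg_le_neg_iff.mp (Tuple.monotone_sort (-x) hjk)⟩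

theorem statement1_general {n : ℕ} (F : Finset (Fin n) → ℝ) (hF : Submodular F)
    (f : (Fin n → ℝ) → ℝ) (hf : IsLovasz F f) :
    ConvexOn ℝ (Set.univ : Set (Fin n → ℝ)) f := by
  unfold IsLovasz at hf
  refine ⟨convex_univ, fun x _ y _ a b ha hb _ => ?_⟩
  obtain ⟨τ, hτ⟩ := exists_sortsDesc (a • x + b • y)
  obtain ⟨σ, hσ⟩ := exists_sortsDesc x
  obtain ⟨ρ, hρ⟩ := exists_sortsDesc y
  rw [hf _ _ hτ, hf _ _ hσ, hf _ _ hρ, lovaszVal_add_smul, smul_eq_mul, smul_eq_mul]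
  gcongr
  · exact hF.lovaszVal_le_of_sortsDesc τ hσ
  · exact hF.lovaszVal_le_of_sortsDesc τ hρ

/-- the Lovász extension of a submodular function (vanishing at ∅)
is a convex function on ℝ^V. -/
theorem statement1 {n : ℕ} (F : Finset (Fin n) → ℝ) (hF0 : F ∅ = 0) (hF : Submodular F)
    (f : (Fin n → ℝ) → ℝ) (hf : IsLovasz F f) :
    ConvexOn ℝ (Set.univ : Set (Fin n → ℝ)) f :=
  statement1_general F hF f hf
end

section
/- Let F be a submodular function on V with F(∅) = 0. Then min_{S ⊆ V} F(S) = max_{y ∈ B(F)} Σ_{i ∈ V} min(y_i, 0), and the maximum on the right-hand side is attained. -/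
open Finset
open Finset

/-!
Both sides are compared through a maximiser `y` of `z ↦ ∑ i, min (z i) 0` on the compact,
nonempty (greedy point) polytope `B(F)`. Weak duality `∑ i, min (z i) 0 ≤ z(S) ≤ F(S)` is
immediate. Conversely, if `y i < 0 < y j`, some tight set (`y(S) = F(S)`) contains `i` but not
`j`: otherwise moving a little mass from `j` to `i` stays in `B(F)` and increases the objective.
Tight sets are closed under `∪` and `∩` by submodularity, so
`T = ⋃_{y i < 0} ⋂_{y j > 0} S_{ij}` is tight, contains every negative coordinate and no positive
one, whence `∑ i, min (y i) 0 = y(T) = F(T)`.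
-/

section NegPart

variable {α : Type*} [Fintype α]

lemma sum_min_zero_le_sum (z : α → ℝ) (S : Finset α) :
    ∑ i, min (z i) 0 ≤ ∑ i ∈ S, z i :=
  calc ∑ i, min (z i) 0 ≤ ∑ i ∈ S, min (z i) 0 :=
        sum_le_sum_of_subset_of_nonpos' (subset_univ S) fun _ _ _ => min_le_right _ _
    _ ≤ ∑ i ∈ S, z i := sum_le_sum fun _ _ => min_le_left _ _

lemma sum_min_zero_eq_sum_of_nonpos {y : α → ℝ} {T : Finset α} (hneg : ∀ i, y i < 0 → i ∈ T)
    (hnonpos : ∀ i ∈ T, y i ≤ 0) : ∑ i, min (y i) 0 = ∑ i ∈ T, y i := by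
  rw [← sum_subset (subset_univ T) fun i _ hi => min_eq_right (not_lt.mp (mt (hneg i) hi))]
  exact sum_congr rfl fun i hi => min_eq_left (hnonpos i hi)

lemma continuous_sum_min_zero : Continuous fun y : α → ℝ => ∑ i, min (y i) 0 := by
  fun_prop

end NegPart

section BasePolytope

variable {n : ℕ} {F : Finset (Fin n) → ℝ}

lemma isCompact_basePolytope (F : Finset (Fin n) → ℝ) : IsCompact (basePolytope F) := by
  have hclosed : IsClosed (basePolytope F) := by
    have : basePolytope F = (⋂ S : Finset (Fin n), {y | ∑ i ∈ S, y i ≤ F S}) ∩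
        {y | ∑ i, y i = F univ} := by
      ext y; simp [basePolytope]
    rw [this]
    exact (isClosed_iInter fun S => isClosed_le (by fun_prop) continuous_const).inter
      (isClosed_eq (by fun_prop) continuous_const)
  refine (isCompact_Icc (a := fun i => F univ - F (univ.erase i)) (b := fun i => F {i})
    ).of_isClosed_subset hclosed ?_
  rintro y ⟨hle, hV⟩
  refine ⟨fun i => ?_, fun i => by simpa using hle {i}⟩
  have := hle (univ.erase i)
  rw [← hV, ← sum_erase_add _ _ (mem_univ i)]
  simp only
  linarith

def initialSeg (n m : ℕ) : Finset (Fin n) :=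
  univ.filter fun j => (j : ℕ) < m

/-- Edmonds' greedy vertex of `B(F)` for the natural order of `Fin n`. -/
noncomputable def greedyPoint (F : Finset (Fin n) → ℝ) : Fin n → ℝ :=
  fun k => F (initialSeg n (k + 1)) - F (initialSeg n k)

lemma sum_greedyPoint_le (hF0 : F ∅ = 0) (hF : Submodular F) (S : Finset (Fin n)) :
    ∑ i ∈ S, greedyPoint F i ≤ F S := by
  induction S using Finset.induction_on_max with
  | empty => simp [hF0]
  | insert a s hlt ih =>
    have ha : a ∉ s := fun h => lt_irrefl a (hlt a h)
    have hunion : insert a s ∪ initialSeg n a = initialSeg n (a + 1) := by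
      ext x
      simp only [initialSeg, mem_union, mem_insert, mem_filter, mem_univ, true_and,
        Fin.ext_iff]
      constructor
      · rintro ((h | h) | h)
        · omega
        · exact Nat.lt_succ_of_lt (Fin.lt_def.mp (hlt x h))
        · omega
      · intro h
        rcases Nat.lt_succ_iff_lt_or_eq.mp h with h | h
        · exact Or.inr h
        · exact Or.inl (Or.inl h)
    have hinter : insert a s ∩ initialSeg n a = s := by
      ext x
      have hxa := fun h => Fin.lt_def.mp (hlt x h)
      simp only [initialSeg, mem_inter, mem_insert, mem_filter, mem_univ, true_and,
        Fin.ext_iff]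
      constructor
      · rintro ⟨h | h, hx⟩ <;> omega
      · exact fun h => ⟨Or.inr h, hxa h⟩
    have hsub := hF (insert a s) (initialSeg n a)
    rw [hunion, hinter] at hsub
    have hga : greedyPoint F a = F (initialSeg n (a + 1)) - F (initialSeg n a) := rfl
    rw [sum_insert ha]
    linarith

lemma sum_greedyPoint (hF0 : F ∅ = 0) : ∑ i, greedyPoint F i = F univ := by
  have hlast : initialSeg n n = univ := by ext a; simp [initialSeg]
  have hfirst : initialSeg n 0 = ∅ := by ext a; simp [initialSeg]
  unfold greedyPoint
  rw [Fin.sum_univ_eq_sum_range (fun m => F (initialSeg n (m + 1)) - F (initialSeg n m)),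
    sum_range_sub (fun m => F (initialSeg n m)), hlast, hfirst, hF0, sub_zero]

lemma greedyPoint_mem_basePolytope (hF0 : F ∅ = 0) (hF : Submodular F) :
    greedyPoint F ∈ basePolytope F :=
  ⟨sum_greedyPoint_le hF0 hF, sum_greedyPoint hF0⟩

end BasePolytope

section TightSets

variable {n : ℕ} {F : Finset (Fin n) → ℝ} {y : Fin n → ℝ}

def tightSets (F : Finset (Fin n) → ℝ) (y : Fin n → ℝ) : Set (Finset (Fin n)) :=
  {S | ∑ i ∈ S, y i = F S}

lemma isSublattice_tightSets (hF : Submodular F) (hy : ∀ S, ∑ i ∈ S, y i ≤ F S) :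
    IsSublattice (tightSets F y) := by
  have key : ∀ S ∈ tightSets F y, ∀ T ∈ tightSets F y,
      S ∪ T ∈ tightSets F y ∧ S ∩ T ∈ tightSets F y := by
    intro S hS T hT
    have hsum := sum_union_inter (s₁ := S) (s₂ := T) (f := y)
    have := hy (S ∪ T)
    have := hy (S ∩ T)
    have := hF S T
    simp only [tightSets, Set.mem_ofPred_eq] at hS hT ⊢
    constructor <;> linarith
  exact ⟨fun S hS T hT => (key S hS T hT).1, fun S hS T hT => (key S hS T hT).2⟩

lemma finsetSup_mem_tightSets (hF0 : F ∅ = 0) (hF : Submodular F) (hy : y ∈ basePolytope F)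
    {ι : Type*} {t : Finset ι} {f : ι → Finset (Fin n)} (h : ∀ i ∈ t, f i ∈ tightSets F y) :
    t.sup f ∈ tightSets F y := by
  rcases t.eq_empty_or_nonempty with rfl | ht
  · simp [tightSets, hF0]
  · exact (isSublattice_tightSets hF hy.1).supClosed.finsetSup_mem ht h

lemma finsetInf_mem_tightSets (hF : Submodular F) (hy : y ∈ basePolytope F)
    {ι : Type*} {t : Finset ι} {f : ι → Finset (Fin n)} (h : ∀ i ∈ t, f i ∈ tightSets F y) :
    t.inf f ∈ tightSets F y := by
  rcases t.eq_empty_or_nonempty with rfl | ht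
  · exact hy.2
  · exact (isSublattice_tightSets hF hy.1).infClosed.finsetInf_mem ht h

end TightSets

section Exchange

variable {n : ℕ} {F : Finset (Fin n) → ℝ} {y : Fin n → ℝ}

lemma sum_add_single_sub_single (y : Fin n → ℝ) (i j : Fin n) (δ : ℝ) (S : Finset (Fin n)) :
    ∑ k ∈ S, (y + Pi.single i δ - Pi.single j δ : Fin n → ℝ) k =
      ∑ k ∈ S, y k + (if i ∈ S then δ else 0) - (if j ∈ S then δ else 0) := by
  simp only [Pi.add_apply, Pi.sub_apply, sum_sub_distrib, sum_add_distrib, sum_pi_single']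

lemma add_single_sub_single_mem_basePolytope (hy : y ∈ basePolytope F) {i j : Fin n} {δ : ℝ}
    (hδ : 0 ≤ δ) (hslack : ∀ S, i ∈ S → j ∉ S → δ ≤ F S - ∑ k ∈ S, y k) :
    (y + Pi.single i δ - Pi.single j δ : Fin n → ℝ) ∈ basePolytope F := by
  refine ⟨fun S => ?_, by simp only [sum_add_single_sub_single, mem_univ, if_true, hy.2]; ring⟩
  have hyS := hy.1 S
  rw [sum_add_single_sub_single]
  by_cases hi : i ∈ S <;> by_cases hj : j ∈ S <;> simp only [hi, hj, if_true, if_false]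
  · linarith
  · linarith [hslack S hi hj]
  · linarith
  · linarith

lemma sum_min_zero_add_single_sub_single {i j : Fin n} (hij : i ≠ j) {δ : ℝ} (hδ : 0 ≤ δ)
    (hi : y i + δ ≤ 0) (hj : δ ≤ y j) :
    ∑ k, min ((y + Pi.single i δ - Pi.single j δ : Fin n → ℝ) k) 0 = ∑ k, min (y k) 0 + δ := by
  have hcoord : ∀ k, min ((y + Pi.single i δ - Pi.single j δ : Fin n → ℝ) k) 0 =
      min (y k) 0 + (Pi.single i δ : Fin n → ℝ) k := by
    intro k
    rcases eq_or_ne k i with rfl | hki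
    · simp [hij, min_eq_left hi, min_eq_left (by linarith : y k ≤ 0)]
    rcases eq_or_ne k j with rfl | hkj
    · simp [hki, min_eq_right (by linarith : 0 ≤ y k - δ), min_eq_right (by linarith : 0 ≤ y k)]
    · simp [hki, hkj]
  simp only [hcoord, sum_add_distrib, Finset.sum_pi_single', if_pos (mem_univ i)]

end Exchange

section Maximizer

variable {n : ℕ} {F : Finset (Fin n) → ℝ} {y : Fin n → ℝ}

lemma exists_tight_mem_not_mem_of_isMaxOn (hy : y ∈ basePolytope F)
    (hmax : IsMaxOn (fun z : Fin n → ℝ => ∑ i, min (z i) 0) (basePolytope F) y)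
    {i j : Fin n} (hi : y i < 0) (hj : 0 < y j) : ∃ S ∈ tightSets F y, i ∈ S ∧ j ∉ S := by
  by_contra! hnone
  have hij : i ≠ j := by rintro rfl; linarith
  obtain ⟨S₀, hS₀, hmin⟩ := exists_min_image (univ.filter fun S => i ∈ S ∧ j ∉ S)
    (fun S => F S - ∑ k ∈ S, y k) ⟨{i}, by simp [hij.symm]⟩
  simp only [mem_filter, mem_univ, true_and] at hS₀ hmin
  have hslack : 0 < F S₀ - ∑ k ∈ S₀, y k :=
    sub_pos.mpr <| (hy.1 S₀).lt_of_ne fun h => hS₀.2 (hnone S₀ h hS₀.1)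
  -- the largest transfer from `j` to `i` that keeps `y` in `B(F)` and the signs of `y i`, `y j`
  set δ := min (F S₀ - ∑ k ∈ S₀, y k) (min (y j) (-y i))
  have hδ : 0 < δ := lt_min hslack (lt_min hj (neg_pos.mpr hi))
  have hδj : δ ≤ y j := (min_le_right _ _).trans (min_le_left _ _)
  have hδi : δ ≤ -y i := (min_le_right _ _).trans (min_le_right _ _)
  have hmem := add_single_sub_single_mem_basePolytope hy hδ.le
    fun S hiS hjS => (min_le_left _ _).trans (hmin S ⟨hiS, hjS⟩)
  have hgain : ∑ k, min ((y + Pi.single i δ - Pi.single j δ : Fin n → ℝ) k) 0 ≤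
      ∑ k, min (y k) 0 := hmax hmem
  rw [sum_min_zero_add_single_sub_single hij hδ.le (by linarith) hδj] at hgain
  linarith

lemma exists_tight_mem_forall_nonpos_of_isMaxOn (hF : Submodular F) (hy : y ∈ basePolytope F)
    (hmax : IsMaxOn (fun z : Fin n → ℝ => ∑ i, min (z i) 0) (basePolytope F) y)
    {i : Fin n} (hi : y i < 0) : ∃ S ∈ tightSets F y, i ∈ S ∧ ∀ k ∈ S, y k ≤ 0 := by
  choose! Sep hSep using fun j (hj : 0 < y j) => exists_tight_mem_not_mem_of_isMaxOn hy hmax hi hj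
  let P := univ.filter fun j => 0 < y j
  refine ⟨P.inf Sep, finsetInf_mem_tightSets hF hy fun j hj => (hSep j (mem_filter.1 hj).2).1,
    mem_inf.2 fun j hj => (hSep j (mem_filter.1 hj).2).2.1, fun k hk => ?_⟩
  by_contra! hk0
  exact (hSep k hk0).2.2 (mem_inf.1 hk k (by simp [P, hk0]))

lemma exists_sum_min_zero_eq_of_isMaxOn (hF0 : F ∅ = 0) (hF : Submodular F)
    (hy : y ∈ basePolytope F)
    (hmax : IsMaxOn (fun z : Fin n → ℝ => ∑ i, min (z i) 0) (basePolytope F) y) :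
    ∃ T, ∑ i, min (y i) 0 = F T := by
  choose! S hS using fun i (hi : y i < 0) =>
    exists_tight_mem_forall_nonpos_of_isMaxOn hF hy hmax hi
  let N := univ.filter fun i => y i < 0
  have htight : N.sup S ∈ tightSets F y :=
    finsetSup_mem_tightSets hF0 hF hy fun i hi => (hS i (mem_filter.1 hi).2).1
  refine ⟨N.sup S, Eq.trans ?_ htight⟩
  refine sum_min_zero_eq_sum_of_nonpos (fun i hi => mem_sup.2 ⟨i, by simp [N, hi], (hS i hi).2.1⟩)
    fun k hk => ?_
  obtain ⟨i, hiN, hki⟩ := mem_sup.1 hk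
  exact (hS i (mem_filter.1 hiN).2).2.2 k hki

end Maximizer

/-- dual of the discrete problem:
`min_{S ⊆ V} F(S) = max_{y ∈ B(F)} Σ_i min(y_i, 0)`, with both optima attained. -/
theorem statement3 {n : ℕ} (F : Finset (Fin n) → ℝ) (hF0 : F ∅ = 0) (hF : Submodular F) :
    ∃ m : ℝ, IsLeast (Set.range F) m ∧
      IsGreatest ((fun y : Fin n → ℝ => ∑ i, min (y i) 0) '' basePolytope F) m := by
  obtain ⟨y, hy, hmax⟩ := (isCompact_basePolytope F).exists_isMaxOn
    ⟨_, greedyPoint_mem_basePolytope hF0 hF⟩ continuous_sum_min_zero.continuousOn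
  obtain ⟨T, hT⟩ := exists_sum_min_zero_eq_of_isMaxOn hF0 hF hy hmax
  refine ⟨F T, ⟨⟨T, rfl⟩, ?_⟩, ⟨y, hy, hT⟩, ?_⟩
  · rintro _ ⟨S, rfl⟩
    exact hT ▸ (sum_min_zero_le_sum y S).trans (hy.1 S)
  · rintro _ ⟨z, hz, rfl⟩
    exact hT ▸ hmax hz
end

section
/- Let F_1, …, F_r be submodular functions on V with F_j(∅) = 0 for all j, and let F = Σ_{j=1}^r F_j. Then min_{S ⊆ V} F(S) = sup { Σ_{j=1}^r g_j(λ_j) : λ_1, …, λ_r ∈ ℝ^V with Σ_{j=1}^r λ_j = 0 }, where g_j(λ) = min_{S ⊆ V} (F_j(S) − λ(S)); moreover the supremum is attained. -/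
open Finset
open Finset

/-!
Weak duality is immediate: if `∑ j, λ j = 0` then `∑ j, g_j (λ j) ≤ ∑ j, (F_j S - λ_j(S)) = F S`
for every `S`. For attainment let `m = min F ≤ 0`. The set function equal to `m` on nonempty sets
and `0` on `∅` is supermodular and lies below `F = ∑ j, F_j`, so Frank's discrete sandwich theorem,
applied to one summand at a time, yields modular `y_j ≤ F_j` with `m ≤ ∑ j, y_j(S)` for all `S`.
Then `λ_j = y_j`, corrected at a single index by `-∑ k, y_k`, gives `∑ j, g_j (λ j) ≥ m`.
The sandwich theorem itself is proved by induction on the ground set, choosing the value of the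
new coordinate between the two bounds that the remaining sets force on it.
-/

theorem sum_iInf_le_of_sum_eq_zero {α ι : Type*} [Fintype ι] [Finite α] (F : ι → Finset α → ℝ)
    {lam : ι → α → ℝ} (hlam : ∑ j, lam j = 0) (S : Finset α) :
    ∑ j, ⨅ T : Finset α, (F j T - ∑ i ∈ T, lam j i) ≤ ∑ j, F j S :=
  calc _ ≤ ∑ j, (F j S - ∑ i ∈ S, lam j i) :=
        sum_le_sum fun j _ => ciInf_le (Set.finite_range _).bddBelow S
    _ = ∑ j, F j S := by
        have hS : ∑ j, ∑ i ∈ S, lam j i = 0 := by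
          rw [sum_comm]
          exact sum_eq_zero fun i _ => by rw [← Finset.sum_apply, hlam, Pi.zero_apply]
        rw [sum_sub_distrib, hS, sub_zero]

section

variable {α : Type*} [DecidableEq α]

def SubmodularOn (E : Finset α) (f : Finset α → ℝ) : Prop :=
  ∀ A ⊆ E, ∀ B ⊆ E, f (A ∪ B) + f (A ∩ B) ≤ f A + f B

def SupermodularOn (E : Finset α) (g : Finset α → ℝ) : Prop :=
  SubmodularOn E (fun T => -g T)

theorem Submodular.submodularOn {n : ℕ} {F : Finset (Fin n) → ℝ} (hF : Submodular F)
    (E : Finset (Fin n)) : SubmodularOn E F :=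
  fun A _ B _ => hF A B

namespace SubmodularOn

variable {E s : Finset α} {f : Finset α → ℝ}

theorem sum {ι : Type*} {f : ι → Finset α → ℝ} (t : Finset ι)
    (hf : ∀ j ∈ t, SubmodularOn E (f j)) : SubmodularOn E (fun T => ∑ j ∈ t, f j T) := by
  intro A hA B hB
  simp only [← sum_add_distrib]
  exact sum_le_sum fun j hj => hf j hj A hA B hB

theorem min_insert {a : α} (hf : SubmodularOn (insert a s) f) (ha : a ∉ s) (c : ℝ) :
    SubmodularOn s (fun T => min (f T) (f (insert a T) - c)) := by
  intro A hA B hB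
  have haA : a ∉ A := fun h => ha (hA h)
  have haB : a ∉ B := fun h => ha (hB h)
  have hA' : A ⊆ insert a s := hA.trans (subset_insert a s)
  have hB' : B ⊆ insert a s := hB.trans (subset_insert a s)
  have haA' : insert a A ⊆ insert a s := insert_subset_insert a hA
  have haB' : insert a B ⊆ insert a s := insert_subset_insert a hB
  have h₁ := min_le_left (f (A ∪ B)) (f (insert a (A ∪ B)) - c)
  have h₂ := min_le_right (f (A ∪ B)) (f (insert a (A ∪ B)) - c)
  have h₃ := min_le_left (f (A ∩ B)) (f (insert a (A ∩ B)) - c)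
  have h₄ := min_le_right (f (A ∩ B)) (f (insert a (A ∩ B)) - c)
  dsimp only
  rcases min_choice (f A) (f (insert a A) - c) with hfA | hfA <;>
    rcases min_choice (f B) (f (insert a B) - c) with hfB | hfB <;> rw [hfA, hfB]
  · linarith [hf A hA' B hB']
  · have := hf A hA' (insert a B) haB'
    rw [union_insert, inter_insert_of_notMem haA] at this
    linarith
  · have := hf (insert a A) haA' B hB'
    rw [insert_union, insert_inter_of_notMem haB] at this
    linarith
  · have := hf (insert a A) haA' (insert a B) haB'
    rw [← insert_union_distrib, ← insert_inter_distrib] at this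
    linarith

end SubmodularOn

namespace SupermodularOn

variable {E s : Finset α} {f g : Finset α → ℝ}

theorem max_insert {a : α} (hg : SupermodularOn (insert a s) g) (ha : a ∉ s) (c : ℝ) :
    SupermodularOn s (fun T => max (g T) (g (insert a T) - c)) := by
  simpa only [SupermodularOn, ← min_neg_neg, neg_sub, sub_neg_eq_add, neg_add_eq_sub] using
    hg.min_insert ha (-c)

theorem sub (hg : SupermodularOn E g) (hf : SubmodularOn E f) :
    SupermodularOn E (fun T => g T - f T) := by
  intro A hA B hB
  linarith [hg A hA B hB, hf A hA B hB]

theorem add_le_add_of_union_eq_of_inter_eq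
    (hg : SupermodularOn E g) (hf : SubmodularOn E f) (hgf : ∀ T ⊆ E, g T ≤ f T)
    {A B C D : Finset α} (hA : A ⊆ E) (hB : B ⊆ E) (hC : C ⊆ E) (hD : D ⊆ E)
    (hU : A ∪ B = C ∪ D) (hI : A ∩ B = C ∩ D) : g A + g B ≤ f C + f D :=
  calc g A + g B ≤ g (A ∪ B) + g (A ∩ B) := by linarith [hg A hA B hB]
    _ ≤ f (A ∪ B) + f (A ∩ B) :=
        add_le_add (hgf _ (union_subset hA hB)) (hgf _ (inter_subset_left.trans hA))
    _ ≤ f C + f D := by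
        rw [hU, hI]
        exact hf C hC D hD

end SupermodularOn

theorem submodularOn_sum_apply (E : Finset α) (y : α → ℝ) :
    SubmodularOn E (fun T => ∑ i ∈ T, y i) :=
  fun _ _ _ _ => sum_union_inter.le

theorem supermodularOn_ite_eq_empty (E : Finset α) {m : ℝ} (hm : m ≤ 0) :
    SupermodularOn E (fun T => if T = ∅ then 0 else m) := by
  intro A _ B _
  by_cases hA : A = ∅
  · simp [hA]
  by_cases hB : B = ∅
  · simp [hB]
  have hAB : A ∪ B ≠ ∅ := fun h => hA (union_eq_empty.1 h).1
  simp only [hA, hB, hAB, if_false]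
  split_ifs <;> linarith

theorem exists_modular_between {E : Finset α} {f g : Finset α → ℝ} (hf0 : f ∅ = 0)
    (hg0 : g ∅ = 0) (hf : SubmodularOn E f) (hg : SupermodularOn E g)
    (hgf : ∀ T ⊆ E, g T ≤ f T) :
    ∃ y : α → ℝ, ∀ T ⊆ E, g T ≤ ∑ i ∈ T, y i ∧ ∑ i ∈ T, y i ≤ f T := by
  induction E using Finset.induction_on generalizing f g with
  | empty =>
    refine ⟨0, fun T hT => ?_⟩
    simp [subset_empty.1 hT, hf0, hg0]
  | @insert a s ha ih =>
    have hs : s ⊆ insert a s := subset_insert a s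
    have hins : ∀ {A}, A ⊆ s → insert a A ⊆ insert a s := insert_subset_insert a
    -- the value `y a := c` must satisfy `g (B + a) - f B ≤ c ≤ f (A + a) - g A` for all `A, B ⊆ s`
    obtain ⟨c, hc_le, hc_ge⟩ : ∃ c : ℝ, (∀ A ⊆ s, c ≤ f (insert a A) - g A) ∧
        ∀ B ⊆ s, g (insert a B) - f B ≤ c := by
      refine ⟨s.powerset.inf' ⟨∅, empty_mem_powerset s⟩ (fun A => f (insert a A) - g A),
        fun A hA => inf'_le _ (mem_powerset.2 hA), fun B hB => le_inf' _ _ fun A hA => ?_⟩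
      have hA := mem_powerset.1 hA
      have hcross := hg.add_le_add_of_union_eq_of_inter_eq hf hgf (hins hB) (hA.trans hs)
        (hins hA) (hB.trans hs) (by grind) (by grind)
      linarith
    obtain ⟨y, hy⟩ := ih (f := fun T => min (f T) (f (insert a T) - c))
      (g := fun T => max (g T) (g (insert a T) - c))
      (by simpa [hf0, hg0] using hc_le ∅ (empty_subset s))
      (by simpa [hf0, hg0] using hc_ge ∅ (empty_subset s))
      (hf.min_insert ha c) (hg.max_insert ha c)
      (fun T hT => max_le (le_min (hgf T (hT.trans hs)) (by linarith [hc_le T hT]))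
        (le_min (by linarith [hc_ge T hT]) (by linarith [hgf _ (hins hT)])))
    refine ⟨Function.update y a c, fun T hT => ?_⟩
    by_cases haT : a ∈ T
    · obtain ⟨hgy, hyf⟩ := hy (T.erase a) (subset_insert_iff.1 hT)
      rw [← insert_erase haT, sum_insert (notMem_erase a T), Function.update_self,
        sum_update_of_notMem (notMem_erase a T)]
      constructor
      · linarith [le_max_right (g (T.erase a)) (g (insert a (T.erase a)) - c)]
      · linarith [min_le_right (f (T.erase a)) (f (insert a (T.erase a)) - c)]
    · have hTs : T ⊆ s := by grind
      obtain ⟨hgy, hyf⟩ := hy T hTs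
      rw [sum_update_of_notMem haT]
      exact ⟨(le_max_left _ _).trans hgy, hyf.trans (min_le_left _ _)⟩

theorem exists_modular_le_of_le_sum {ι : Type*} [DecidableEq ι] {E : Finset α}
    {f : ι → Finset α → ℝ} {g : Finset α → ℝ} (s : Finset ι)
    (hf0 : ∀ j ∈ s, f j ∅ = 0) (hg0 : g ∅ = 0) (hf : ∀ j ∈ s, SubmodularOn E (f j))
    (hg : SupermodularOn E g) (hgf : ∀ T ⊆ E, g T ≤ ∑ j ∈ s, f j T) :
    ∃ y : ι → α → ℝ, (∀ j ∈ s, ∀ T ⊆ E, ∑ i ∈ T, y j i ≤ f j T) ∧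
      ∀ T ⊆ E, g T ≤ ∑ j ∈ s, ∑ i ∈ T, y j i := by
  induction s using Finset.induction_on generalizing g with
  | empty => exact ⟨0, by simp, by simpa using hgf⟩
  | @insert a t hat ih =>
    have ha := mem_insert_self a t
    have ht : ∀ {j}, j ∈ t → j ∈ insert a t := mem_insert_of_mem
    obtain ⟨z, hz⟩ := exists_modular_between (f := f a) (g := fun T => g T - ∑ j ∈ t, f j T)
      (hf0 a ha) (by simp [hg0, sum_eq_zero fun j hj => hf0 j (ht hj)]) (hf a ha)
      (hg.sub (SubmodularOn.sum t fun j hj => hf j (ht hj)))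
      (fun T hT => by linarith [(hgf T hT).trans_eq (sum_insert hat)])
    obtain ⟨y, hyf, hgy⟩ := ih (g := fun T => g T - ∑ i ∈ T, z i)
      (fun j hj => hf0 j (ht hj)) (by simp [hg0]) (fun j hj => hf j (ht hj))
      (hg.sub (submodularOn_sum_apply E z)) (fun T hT => by linarith [(hz T hT).1])
    have hy_t : ∀ j ∈ t, Function.update y a z j = y j :=
      fun j hj => Function.update_of_ne (ne_of_mem_of_not_mem hj hat) z y
    refine ⟨Function.update y a z, fun j hj T hT => ?_, fun T hT => ?_⟩
    · rcases mem_insert.1 hj with rfl | hj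
      · simpa using (hz T hT).2
      · rw [hy_t j hj]
        exact hyf j hj T hT
    · have hsum : ∑ j ∈ t, ∑ i ∈ T, Function.update y a z j i = ∑ j ∈ t, ∑ i ∈ T, y j i :=
        sum_congr rfl fun j hj => by rw [hy_t j hj]
      rw [sum_insert hat, Function.update_self, hsum]
      linarith [hgy T hT]

theorem exists_sum_iInf_ge {ι : Type*} [Fintype ι] [DecidableEq ι] [Fintype α]
    (F : ι → Finset α → ℝ) (hF0 : ∀ j, F j ∅ = 0) (hF : ∀ j, SubmodularOn univ (F j))
    {m : ℝ} (hm0 : m ≤ 0) (hm : ∀ S, m ≤ ∑ j, F j S) :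
    ∃ lam : ι → α → ℝ, ∑ j, lam j = 0 ∧
      m ≤ ∑ j, ⨅ S : Finset α, (F j S - ∑ i ∈ S, lam j i) := by
  rcases isEmpty_or_nonempty ι with hι | ⟨⟨j₀⟩⟩
  · exact ⟨0, by simp, by simpa using hm0⟩
  obtain ⟨Y, hYF, hmY⟩ := exists_modular_le_of_le_sum (E := univ)
    (g := fun T => if T = ∅ then 0 else m) univ (fun j _ => hF0 j) (if_pos rfl)
    (fun j _ => hF j) (supermodularOn_ite_eq_empty univ hm0)
    (fun T _ => by split_ifs with hT <;> simp [hT, hF0, hm T])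
  have hmY' : ∀ T, m ≤ ∑ j, ∑ i ∈ T, Y j i :=
    fun T => le_trans (by split_ifs <;> simp [hm0]) (hmY T (subset_univ T))
  -- the excess `∑ k, Y k`, which is at least `m` on every set, is charged to the block `j₀`
  refine ⟨fun j i => Y j i - if j = j₀ then ∑ k, Y k i else 0, ?_, ?_⟩
  · ext i
    simp [sum_sub_distrib]
  calc m = ∑ j, if j = j₀ then m else 0 := by simp
    _ ≤ _ := sum_le_sum fun j _ => le_ciInf fun S => ?_
  have := hYF j (mem_univ j) S (subset_univ S)
  split_ifs with hj
  · subst hj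
    have hmS := hmY' S
    rw [sum_comm] at hmS
    simp only [↓reduceIte, sum_sub_distrib]
    linarith
  · simp only [hj, if_false, sub_zero]
    linarith

end

/-- Lemma 1, dual decomposition of the nonsmooth problem:
for submodular `F_1, …, F_r` with `F_j(∅) = 0` and `F = Σ_j F_j`,
`min_S F(S) = sup { Σ_j g_j(λ_j) : Σ_j λ_j = 0 }` where
`g_j(λ) = min_S (F_j(S) − λ(S))`, and the supremum is attained. -/
theorem statement4 {n r : ℕ} (F : Fin r → Finset (Fin n) → ℝ)
    (hF0 : ∀ j, F j ∅ = 0) (hF : ∀ j, Submodular (F j)) :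
    ∃ m : ℝ, IsLeast (Set.range (fun S : Finset (Fin n) => ∑ j, F j S)) m ∧
      IsGreatest {v : ℝ | ∃ lam : Fin r → Fin n → ℝ, (∑ j, lam j) = 0 ∧
        v = ∑ j, ⨅ S : Finset (Fin n), (F j S - ∑ i ∈ S, lam j i)} m := by
  obtain ⟨S₀, hS₀⟩ := Finite.exists_min (fun S : Finset (Fin n) => ∑ j, F j S)
  obtain ⟨lam, hlam, hle⟩ := exists_sum_iInf_ge F hF0 (fun j => (hF j).submodularOn univ)
    (by simpa [hF0] using hS₀ ∅) hS₀
  refine ⟨∑ j, F j S₀, ⟨⟨S₀, rfl⟩, ?_⟩,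
    ⟨⟨lam, hlam, le_antisymm hle (sum_iInf_le_of_sum_eq_zero F hlam S₀)⟩, ?_⟩⟩
  · rintro _ ⟨S, rfl⟩
    exact hS₀ S
  · rintro _ ⟨lam, hlam, rfl⟩
    exact sum_iInf_le_of_sum_eq_zero F hlam S₀
end

section
/- Let f, h : ℝ^n → ℝ be convex (finite-valued) functions and y ∈ ℝ^n. Then (1/2)‖y‖² − min_{x ∈ ℝ^n} [ (1/2)‖x − y‖² + f(x) + h(x) ] = inf_{ν, μ ∈ ℝ^n} [ (1/2)‖ν + μ − y‖² + f*(ν) + h*(μ) ], the infimum on the right is attained at some (ν*, μ*) with f*(ν*) and h*(μ*) finite, and the unique minimizer x* of the left-hand problem satisfies x* = y − ν* − μ*. -/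
open Finset

/-- The Fenchel conjugate of a (finite-valued) function on ℝ^n, with values in
`EReal` (it may take the value `+∞`): `f*(ν) = sup_x (⟨ν, x⟩ − f(x))`. -/
noncomputable def fenchelConj {n : ℕ} (f : (Fin n → ℝ) → ℝ) (v : Fin n → ℝ) : EReal :=
  ⨆ x : Fin n → ℝ, ((∑ i, v i * x i - f x : ℝ) : EReal)

/-!
Let `x*` minimize `½‖x − y‖² + f x + h x`; it exists because convex functions have affine
minorants, so the objective grows quadratically. First-order optimality of the proximal problem
gives `y − x* ∈ ∂(f + h)(x*)`, and the sum rule for subdifferentials (Hahn–Banach separation of the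
strict epigraph of `f` from the hypograph of a concave minorant) splits it as `ν + μ` with
`ν ∈ ∂f(x*)`, `μ ∈ ∂h(x*)`. At a subgradient the Fenchel–Young inequality is an equality, so the
dual objective at `(ν, μ)` equals the primal value, while Fenchel–Young at `x*` for arbitrary
`(ν', μ')` is weak duality.
-/

open Set Filter Topology

section
variable {E : Type*} [AddCommGroup E] [Module ℝ E] [TopologicalSpace E]
  [IsTopologicalAddGroup E] [ContinuousSMul ℝ E]

theorem ConvexOn.exists_affine_between {f g : E → ℝ} {s : Set E}
    (hf : ConvexOn ℝ univ f) (hfc : Continuous f) (hg : ConcaveOn ℝ s g)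
    (hgf : ∀ x ∈ s, g x ≤ f x) {x₀ : E} (hx₀ : x₀ ∈ s) (hfg : g x₀ = f x₀) :
    ∃ ℓ : StrongDual ℝ E,
      (∀ x, f x₀ + ℓ (x - x₀) ≤ f x) ∧ ∀ x ∈ s, g x ≤ g x₀ + ℓ (x - x₀) := by
  have hdisj : Disjoint {p : E × ℝ | f p.1 < p.2} {p | p.1 ∈ s ∧ p.2 ≤ g p.1} :=
    Set.disjoint_left.2 fun p hlt ⟨hs, hle⟩ => (hlt.trans_le hle).not_ge (hgf _ hs)
  obtain ⟨φ, u, hA, hB⟩ := geometric_hahn_banach_open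
    (by simpa using hf.convex_strict_epigraph) (isOpen_lt (hfc.comp continuous_fst) continuous_snd)
    (by simpa [Set.ofPred_and] using hg.convex_hypograph) hdisj
  set a := φ (0, 1)
  set ψ : StrongDual ℝ E := φ.comp (ContinuousLinearMap.inl ℝ E ℝ)
  have hφ : ∀ x t, φ (x, t) = ψ x + t * a := fun x t => by
    rw [show ((x, t) : E × ℝ) = (x, 0) + t • (0, 1) by simp, map_add, map_smul, smul_eq_mul]
    rfl
  have hA' : ∀ x, ∀ ε > 0, ψ x + f x * a + ε * a < u := fun x ε hε => by
    simpa [hφ, hε, add_mul, add_assoc] using hA (x, f x + ε)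
  have hB' : ∀ x ∈ s, u ≤ ψ x + g x * a := fun x hx => by
    simpa [hφ, hx] using hB (x, g x)
  have hB₀ : u ≤ ψ x₀ + f x₀ * a := hfg ▸ hB' x₀ hx₀
  have ha : 0 < -a := by linarith [hA' x₀ 1 one_pos]
  have hfu : ∀ x, ψ x + f x * a ≤ u := fun x => le_of_forall_pos_lt_add fun ε hε => by
    have h := hA' x (ε / -a) (div_pos hε ha)
    rw [div_neg, neg_mul, div_mul_cancel₀ _ (neg_pos.1 ha).ne] at h
    linarith
  -- The separating hyperplane `ψ x + t * a = u` is not vertical (`a < 0`), so it is the graph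
  -- of an affine function with linear part `(-a)⁻¹ • ψ`.
  refine ⟨(-a)⁻¹ • ψ, fun x => ?_, fun x hx => ?_⟩
  · have : (-a)⁻¹ * (ψ x - ψ x₀) ≤ f x - f x₀ := by
      rw [inv_mul_le_iff₀ ha]
      linear_combination hfu x + hB₀
    simp only [FunLike.coe_smul, Pi.smul_apply, map_sub, smul_eq_mul]
    linarith
  · have : g x - g x₀ ≤ (-a)⁻¹ * (ψ x - ψ x₀) := by
      rw [le_inv_mul_iff₀ ha, hfg]
      linear_combination hfu x₀ + hB' x hx
    simp only [FunLike.coe_smul, Pi.smul_apply, map_sub, smul_eq_mul]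
    linarith
end

section
variable {ι : Type*} [Fintype ι]

def HasSubgradientAt (f : (ι → ℝ) → ℝ) (ν x₀ : ι → ℝ) : Prop :=
  ∀ x, f x₀ + ν ⬝ᵥ (x - x₀) ≤ f x

theorem StrongDual.exists_dotProduct_eq (ℓ : StrongDual ℝ (ι → ℝ)) :
    ∃ ν : ι → ℝ, ∀ x, ℓ x = ν ⬝ᵥ x := by
  classical
  exact ⟨(dotProductEquiv ℝ ι).symm ℓ.toLinearMap, fun x =>
    (LinearMap.congr_fun ((dotProductEquiv ℝ ι).apply_symm_apply ℓ.toLinearMap) x).symm⟩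

theorem sq_norm_le_sum_sq (z : ι → ℝ) : ‖z‖ ^ 2 ≤ ∑ i, z i ^ 2 := by
  rw [← Real.le_sqrt (norm_nonneg z) (Finset.sum_nonneg fun i _ => sq_nonneg _)]
  refine (pi_norm_le_iff_of_nonneg (Real.sqrt_nonneg _)).2 fun i => ?_
  exact Real.abs_le_sqrt (Finset.single_le_sum (fun j _ => sq_nonneg (z j)) (Finset.mem_univ i))

variable {f g : (ι → ℝ) → ℝ}

theorem ConvexOn.exists_hasSubgradientAt (hf : ConvexOn ℝ univ f) (x₀ : ι → ℝ) :
    ∃ ν, HasSubgradientAt f ν x₀ := by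
  have hconc : ConcaveOn ℝ {x₀} f := ⟨convex_singleton x₀, by
    rintro x rfl y rfl a b - - hab
    rw [← add_smul, ← add_smul, hab, one_smul, one_smul]⟩
  obtain ⟨ℓ, hℓ, -⟩ := hf.exists_affine_between hf.locallyLipschitz.continuous hconc
    (fun x hx => (eq_of_mem_singleton hx ▸ le_rfl)) rfl rfl
  obtain ⟨ν, hν⟩ := ℓ.exists_dotProduct_eq
  exact ⟨ν, fun x => hν (x - x₀) ▸ hℓ x⟩

theorem HasSubgradientAt.exists_split_of_add (hf : ConvexOn ℝ univ f) (hg : ConvexOn ℝ univ g)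
    {ν₀ x₀ : ι → ℝ} (h : HasSubgradientAt (f + g) ν₀ x₀) :
    ∃ ν, HasSubgradientAt f ν x₀ ∧ HasSubgradientAt g (ν₀ - ν) x₀ := by
  classical
  set c := f x₀ + g x₀ - ν₀ ⬝ᵥ x₀
  have hconc : ConcaveOn ℝ univ fun x => c + ν₀ ⬝ᵥ x - g x :=
    ((concaveOn_const c convex_univ).add
      ((dotProductEquiv ℝ ι ν₀).concaveOn convex_univ)).sub hg
  have hle : ∀ x, c + ν₀ ⬝ᵥ x - g x ≤ f x := fun x => by
    have := h x
    simp only [Pi.add_apply, dotProduct_sub] at this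
    linarith
  obtain ⟨ℓ, hf', hg'⟩ := hf.exists_affine_between hf.locallyLipschitz.continuous hconc
    (fun x _ => hle x) (mem_univ x₀) (by simp only [c]; ring)
  obtain ⟨ν, hν⟩ := ℓ.exists_dotProduct_eq
  refine ⟨ν, fun x => hν (x - x₀) ▸ hf' x, fun x => ?_⟩
  have := hg' x (mem_univ x)
  simp only [hν, sub_dotProduct, dotProduct_sub] at this ⊢
  linarith

variable {G : (ι → ℝ) → ℝ}

theorem ConvexOn.exists_forall_half_sum_sq_add_le (hG : ConvexOn ℝ univ G) (y : ι → ℝ) :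
    ∃ x₀, ∀ x, (1/2) * ∑ i, (x₀ i - y i)^2 + G x₀ ≤ (1/2) * ∑ i, (x i - y i)^2 + G x := by
  obtain ⟨c, hc⟩ := hG.exists_hasSubgradientAt y
  have hcont : Continuous fun x : ι → ℝ => (1/2) * ∑ i, (x i - y i)^2 + G x := by
    have := hG.locallyLipschitz.continuous
    fun_prop
  have hlower : ∀ x, G y - (1/2) * c ⬝ᵥ c + (1/2) * dist x (y - c) ^ 2
      ≤ (1/2) * ∑ i, (x i - y i)^2 + G x := fun x => by
    have hsq : (1/2) * ∑ i, (x i - y i)^2 + c ⬝ᵥ (x - y)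
        = (1/2) * ∑ i, ((x - (y - c)) i)^2 - (1/2) * c ⬝ᵥ c := by
      simp only [dotProduct, Finset.mul_sum, ← Finset.sum_add_distrib, ← Finset.sum_sub_distrib]
      exact Finset.sum_congr rfl fun i _ => by simp only [Pi.sub_apply]; ring
    have := sq_norm_le_sum_sq (x - (y - c))
    rw [dist_eq_norm]
    linarith [hc x]
  refine hcont.exists_forall_le (tendsto_atTop_mono hlower ?_)
  exact tendsto_atTop_add_const_left _ _ <| Tendsto.const_mul_atTop (by norm_num) <|
    (tendsto_pow_atTop two_ne_zero).comp (tendsto_dist_right_cocompact_atTop _)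

variable {y x₀ : ι → ℝ}

theorem ConvexOn.hasSubgradientAt_of_forall_half_sum_sq_add_le (hG : ConvexOn ℝ univ G)
    (hmin : ∀ x, (1/2) * ∑ i, (x₀ i - y i)^2 + G x₀ ≤ (1/2) * ∑ i, (x i - y i)^2 + G x) :
    HasSubgradientAt G (y - x₀) x₀ := by
  intro x
  set d := x - x₀
  -- Moving from `x₀` a fraction `t` towards `x` cannot decrease the objective; divide by `t`
  -- and let `t → 0`.
  have hstep : ∀ t ∈ Ioc (0:ℝ) 1, G x₀ + (y - x₀) ⬝ᵥ d - t * ((1/2) * d ⬝ᵥ d) ≤ G x := by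
    rintro t ⟨ht0, ht1⟩
    have hconv := hG.2 (mem_univ x₀) (mem_univ x) (sub_nonneg.2 ht1) ht0.le (sub_add_cancel 1 t)
    have hq := hmin ((1 - t) • x₀ + t • x)
    have hexp : ∑ i, (((1 - t) • x₀ + t • x) i - y i)^2
        = ∑ i, (x₀ i - y i)^2 - 2 * t * (y - x₀) ⬝ᵥ d + t^2 * d ⬝ᵥ d := by
      simp only [dotProduct, Finset.mul_sum, ← Finset.sum_add_distrib, ← Finset.sum_sub_distrib]
      refine Finset.sum_congr rfl fun i _ => ?_
      simp only [d, Pi.add_apply, Pi.sub_apply, Pi.smul_apply, smul_eq_mul]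
      ring
    rw [hexp] at hq
    simp only [smul_eq_mul] at hconv
    refine le_of_mul_le_mul_left ?_ ht0
    linear_combination hq + hconv
  refine le_of_tendsto ?_ (eventually_of_mem (Ioc_mem_nhdsGT one_pos) hstep)
  refine tendsto_nhdsWithin_of_tendsto_nhds ?_
  exact (by fun_prop : Continuous fun t : ℝ => G x₀ + (y - x₀) ⬝ᵥ d - t * ((1/2) * d ⬝ᵥ d)).tendsto'
    0 _ (by simp)

theorem HasSubgradientAt.half_sum_sq_add_le (h : HasSubgradientAt G (y - x₀) x₀) (x : ι → ℝ) :
    (1/2) * ∑ i, (x₀ i - y i)^2 + G x₀ + (1/2) * ∑ i, (x i - x₀ i)^2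
      ≤ (1/2) * ∑ i, (x i - y i)^2 + G x := by
  have hsq : (1/2) * ∑ i, (x i - y i)^2 + (y - x₀) ⬝ᵥ (x - x₀)
      = (1/2) * ∑ i, (x₀ i - y i)^2 + (1/2) * ∑ i, (x i - x₀ i)^2 := by
    simp only [dotProduct, Finset.mul_sum, ← Finset.sum_add_distrib]
    exact Finset.sum_congr rfl fun i _ => by simp only [Pi.sub_apply]; ring
  linarith [h x]
end

section
variable {n : ℕ}

theorem le_fenchelConj (f : (Fin n → ℝ) → ℝ) (v x : Fin n → ℝ) :
    ((v ⬝ᵥ x - f x : ℝ) : EReal) ≤ fenchelConj f v :=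
  le_iSup (fun x => ((∑ i, v i * x i - f x : ℝ) : EReal)) x

theorem HasSubgradientAt.fenchelConj_eq {f : (Fin n → ℝ) → ℝ} {ν x₀ : Fin n → ℝ}
    (h : HasSubgradientAt f ν x₀) : fenchelConj f ν = ((ν ⬝ᵥ x₀ - f x₀ : ℝ) : EReal) := by
  refine le_antisymm (iSup_le fun x => ?_) (le_fenchelConj f ν x₀)
  change ((ν ⬝ᵥ x - f x : ℝ) : EReal) ≤ _
  have := h x
  rw [dotProduct_sub] at this
  exact EReal.coe_le_coe_iff.2 (by linarith)

theorem fenchelConj_weak_duality (f h : (Fin n → ℝ) → ℝ) (y ν μ x : Fin n → ℝ) :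
    (((1/2) * ∑ i, (y i)^2 - ((1/2) * ∑ i, (x i - y i)^2 + f x + h x) : ℝ) : EReal)
      ≤ (((1/2) * ∑ i, (ν i + μ i - y i)^2 : ℝ) : EReal) + fenchelConj f ν + fenchelConj h μ := by
  have hsq : (1/2) * ∑ i, (ν i + μ i - y i)^2 + ν ⬝ᵥ x + μ ⬝ᵥ x
      + (1/2) * ∑ i, (x i - y i)^2 - (1/2) * ∑ i, (y i)^2
      = (1/2) * ∑ i, (ν i + μ i + x i - y i)^2 := by
    simp only [dotProduct, Finset.mul_sum, ← Finset.sum_add_distrib, ← Finset.sum_sub_distrib]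
    exact Finset.sum_congr rfl fun i _ => by ring
  calc (((1/2) * ∑ i, (y i)^2 - ((1/2) * ∑ i, (x i - y i)^2 + f x + h x) : ℝ) : EReal)
      ≤ (((1/2) * ∑ i, (ν i + μ i - y i)^2 : ℝ) : EReal) + ((ν ⬝ᵥ x - f x : ℝ) : EReal)
          + ((μ ⬝ᵥ x - h x : ℝ) : EReal) := by
        rw [← EReal.coe_add, ← EReal.coe_add, EReal.coe_le_coe_iff]
        have : 0 ≤ ∑ i, (ν i + μ i + x i - y i)^2 := by positivity
        linarith
    _ ≤ _ := add_le_add (add_le_add le_rfl (le_fenchelConj f ν x)) (le_fenchelConj h μ x)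
theorem fenchelConj_strong_duality {f h : (Fin n → ℝ) → ℝ} {y x₀ ν : Fin n → ℝ}
    (hν : HasSubgradientAt f ν x₀) (hμ : HasSubgradientAt h (y - x₀ - ν) x₀) :
    (((1/2) * ∑ i, (ν i + (y - x₀ - ν) i - y i)^2 : ℝ) : EReal)
        + fenchelConj f ν + fenchelConj h (y - x₀ - ν)
      = (((1/2) * ∑ i, (y i)^2 - ((1/2) * ∑ i, (x₀ i - y i)^2 + f x₀ + h x₀) : ℝ) : EReal) := by
  have hsq : (1/2) * ∑ i, (ν i + (y - x₀ - ν) i - y i)^2 + ν ⬝ᵥ x₀ + (y - x₀ - ν) ⬝ᵥ x₀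
      + (1/2) * ∑ i, (x₀ i - y i)^2 = (1/2) * ∑ i, (y i)^2 := by
    simp only [dotProduct, Finset.mul_sum, ← Finset.sum_add_distrib]
    exact Finset.sum_congr rfl fun i _ => by simp only [Pi.sub_apply]; ring
  rw [hν.fenchelConj_eq, hμ.fenchelConj_eq, ← EReal.coe_add, ← EReal.coe_add,
    EReal.coe_eq_coe_iff]
  linarith
end

/-- BCD on the dual = proximal-Dykstra; strong duality for
`min_x ½‖x − y‖² + f(x) + h(x)`:
`½‖y‖² − min_x [½‖x−y‖² + f(x) + h(x)] = inf_{ν,μ} [½‖ν+μ−y‖² + f*(ν) + h*(μ)]`,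
the infimum is attained at some `(ν*, μ*)` with finite conjugate values, and the
unique primal minimizer satisfies `x* = y − ν* − μ*`. -/
theorem statement8 {n : ℕ} (f h : (Fin n → ℝ) → ℝ)
    (hf : ConvexOn ℝ (Set.univ : Set (Fin n → ℝ)) f)
    (hh : ConvexOn ℝ (Set.univ : Set (Fin n → ℝ)) h)
    (y : Fin n → ℝ) :
    ∃ xstar ν μ : Fin n → ℝ,
      IsLeast (Set.range (fun x : Fin n → ℝ =>
        (1/2) * ∑ i, (x i - y i)^2 + f x + h x))
        ((1/2) * ∑ i, (xstar i - y i)^2 + f xstar + h xstar) ∧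
      (∀ x : Fin n → ℝ,
        (1/2) * ∑ i, (x i - y i)^2 + f x + h x
          = (1/2) * ∑ i, (xstar i - y i)^2 + f xstar + h xstar → x = xstar) ∧
      fenchelConj f ν ≠ ⊤ ∧ fenchelConj h μ ≠ ⊤ ∧
      ((((1/2) * ∑ i, (ν i + μ i - y i)^2 : ℝ) : EReal) + fenchelConj f ν + fenchelConj h μ
        = (((1/2) * ∑ i, (y i)^2
            - ((1/2) * ∑ i, (xstar i - y i)^2 + f xstar + h xstar) : ℝ) : EReal)) ∧
      (∀ ν' μ' : Fin n → ℝ,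
        (((1/2) * ∑ i, (ν i + μ i - y i)^2 : ℝ) : EReal) + fenchelConj f ν + fenchelConj h μ
          ≤ (((1/2) * ∑ i, (ν' i + μ' i - y i)^2 : ℝ) : EReal)
              + fenchelConj f ν' + fenchelConj h μ') ∧
      xstar = y - ν - μ := by
  obtain ⟨xs, hmin⟩ := (hf.add hh).exists_forall_half_sum_sq_add_le y
  have hsub : HasSubgradientAt (f + h) (y - xs) xs :=
    (hf.add hh).hasSubgradientAt_of_forall_half_sum_sq_add_le hmin
  obtain ⟨ν, hν, hμ⟩ := hsub.exists_split_of_add hf hh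
  have hgrowth := hsub.half_sum_sq_add_le
  simp only [Pi.add_apply, ← add_assoc] at hgrowth
  have hdual := fenchelConj_strong_duality hν hμ
  refine ⟨xs, ν, y - xs - ν, ⟨⟨xs, rfl⟩, ?_⟩, fun x hx => ?_, ?_, ?_, hdual,
    fun ν' μ' => hdual ▸ fenchelConj_weak_duality f h y ν' μ' xs, by abel⟩
  · rintro _ ⟨x, rfl⟩
    have : 0 ≤ ∑ i, (x i - xs i)^2 := by positivity
    linarith [hgrowth x]
  · have h0 : ∑ i, (x i - xs i)^2 = 0 := le_antisymm (by linarith [hgrowth x]) (by positivity)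
    exact sub_eq_zero.1 (dotProduct_self_eq_zero.1 (by simpa [dotProduct, sq] using h0))
  · exact hν.fenchelConj_eq ▸ EReal.coe_ne_top _
  · exact hμ.fenchelConj_eq ▸ EReal.coe_ne_top _
end

section
/- Let F be a submodular function on V with F(∅) = 0, and for each i ∈ V let h_i : ℝ → ℝ be strictly convex and continuously differentiable with sup_{λ∈ℝ} h_i'(λ) = +∞ and inf_{λ∈ℝ} h_i'(λ) = −∞. Let α < β, let S^α be any minimizer of S ↦ F(S) + Σ_{i∈S} h_i'(α), and let S^β be any minimizer of S ↦ F(S) + Σ_{i∈S} h_i'(β). Then S^β ⊆ S^α. -/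
/-!
Strict convexity makes each `h_i'` strictly increasing, so the weights at `β` exceed those at `α`
coordinatewise. Testing the minimality of `S^α` against `S^α ∪ S^β`, that of `S^β` against
`S^α ∩ S^β`, and adding the submodular inequality for `S^α, S^β` leaves
`Σ_{i ∈ S^β \ S^α} h_i'(β) ≤ Σ_{i ∈ S^β \ S^α} h_i'(α)`, which forces `S^β \ S^α = ∅`.
-/

open Finset
open Finset

theorem StrictConvexOn.strictMono_of_hasDerivAt {f f' : ℝ → ℝ}
    (hf : StrictConvexOn ℝ Set.univ f) (hd : ∀ x, HasDerivAt f (f' x) x) : StrictMono f' := by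
  have hmono := hf.strictMonoOn_deriv fun x _ ↦ (hd x).differentiableAt
  intro x y hxy
  simpa only [(hd _).deriv] using hmono (Set.mem_univ x) (Set.mem_univ y) hxy

section Minimizers

variable {n : ℕ} {F : Finset (Fin n) → ℝ} {w w' : Fin n → ℝ} {S S' : Finset (Fin n)}

theorem Submodular.sum_sdiff_le_of_isMinimizer (hF : Submodular F)
    (hS : ∀ T, F S + ∑ i ∈ S, w i ≤ F T + ∑ i ∈ T, w i)
    (hS' : ∀ T, F S' + ∑ i ∈ S', w' i ≤ F T + ∑ i ∈ T, w' i) :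
    ∑ i ∈ S' \ S, w' i ≤ ∑ i ∈ S' \ S, w i := by
  have hunion : ∑ i ∈ S ∪ S', w i = ∑ i ∈ S, w i + ∑ i ∈ S' \ S, w i := by
    rw [← union_sdiff_self_eq_union, sum_union disjoint_sdiff]
  have hsplit : ∑ i ∈ S', w' i = ∑ i ∈ S ∩ S', w' i + ∑ i ∈ S' \ S, w' i := by
    rw [inter_comm, sum_inter_add_sum_sdiff]
  have := hS (S ∪ S')
  have := hS' (S ∩ S')
  linarith [hF S S']

theorem Submodular.subset_of_isMinimizer_of_lt (hF : Submodular F) (hw : ∀ i, w i < w' i)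
    (hS : ∀ T, F S + ∑ i ∈ S, w i ≤ F T + ∑ i ∈ T, w i)
    (hS' : ∀ T, F S' + ∑ i ∈ S', w' i ≤ F T + ∑ i ∈ T, w' i) :
    S' ⊆ S := by
  by_contra hsub
  obtain ⟨i, hiS', hiS⟩ := not_subset.mp hsub
  have hne : (S' \ S).Nonempty := ⟨i, mem_sdiff.mpr ⟨hiS', hiS⟩⟩
  exact (hF.sum_sdiff_le_of_isMinimizer hS hS').not_gt
    (sum_lt_sum_of_nonempty hne fun j _ ↦ hw j)

end Minimizers

theorem statement10_general {n : ℕ} (F : Finset (Fin n) → ℝ) (hF : Submodular F)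
    (h h' : Fin n → ℝ → ℝ)
    (hconv : ∀ i, StrictConvexOn ℝ (Set.univ : Set ℝ) (h i))
    (hderiv : ∀ i t, HasDerivAt (h i) (h' i t) t)
    (α β : ℝ) (hαβ : α < β) (Sα Sβ : Finset (Fin n))
    (hSα : ∀ T : Finset (Fin n), F Sα + ∑ i ∈ Sα, h' i α ≤ F T + ∑ i ∈ T, h' i α)
    (hSβ : ∀ T : Finset (Fin n), F Sβ + ∑ i ∈ Sβ, h' i β ≤ F T + ∑ i ∈ T, h' i β) :
    Sβ ⊆ Sα :=
  hF.subset_of_isMinimizer_of_lt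
    (fun i ↦ (hconv i).strictMono_of_hasDerivAt (hderiv i) hαβ) hSα hSβ

/-- Proposition: monotonicity of optimizing sets: with `h_i`
strictly convex, continuously differentiable and with surjective-at-infinity
derivatives, if `α < β`, `S^α` minimizes `S ↦ F(S) + Σ_{i∈S} h_i'(α)` and `S^β`
minimizes `S ↦ F(S) + Σ_{i∈S} h_i'(β)`, then `S^β ⊆ S^α`. -/
theorem statement10 {n : ℕ} (F : Finset (Fin n) → ℝ) (hF0 : F ∅ = 0) (hF : Submodular F)
    (h h' : Fin n → ℝ → ℝ)
    (hconv : ∀ i, StrictConvexOn ℝ (Set.univ : Set ℝ) (h i))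
    (hderiv : ∀ i t, HasDerivAt (h i) (h' i t) t)
    (hcont : ∀ i, Continuous (h' i))
    (hsupTop : ∀ i M, ∃ t, M ≤ h' i t)
    (hinfBot : ∀ i M, ∃ t, h' i t ≤ M)
    (α β : ℝ) (hαβ : α < β) (Sα Sβ : Finset (Fin n))
    (hSα : ∀ T : Finset (Fin n), F Sα + ∑ i ∈ Sα, h' i α ≤ F T + ∑ i ∈ T, h' i α)
    (hSβ : ∀ T : Finset (Fin n), F Sβ + ∑ i ∈ Sβ, h' i β ≤ F T + ∑ i ∈ T, h' i β) :
    Sβ ⊆ Sα :=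
  statement10_general F hF h h' hconv hderiv α β hαβ Sα Sβ hSα hSβ
end
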